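/- arXiv:2602.15194 — 2 statements merged into one kernel-verified Lean document; each statement's English description precedes it below -/
import Mathlib

section
/- Let N = 2K + 1 be odd, d, m ∈ ℕ, ω₀ > 0, ω_f ∈ ℝ, J_j ∈ ℂ^{d×d} for j = 0, …, N−1, and B ∈ ℂ^{d×m}. Let θ_j = 2πj/N, let D ∈ ℂ^{N×N} be the Fourier spectral differentiation matrix with entries D_{jk} = (1/2)(−1)^{j−k} / sin(π(j−k)/N) for j ≠ k and D_{jj} = 0, and define the time-spectral operator L_TS = blkdiag(iω_f I_d − J_0, …, iω_f I_d − J_{N−1}) + ω₀ (D ⊗ I_d) and B_TS = blkdiag(B, …, B) (N copies). Define Ĵ_k = (1/N) Σ_{j=0}^{N−1} J_j e^{−i k θ_j} for k ∈ ℤ (so Ĵ is N-periodic in k), and the harmonic operator L_HR ∈ ℂ^{Nd×Nd} with blocks indexed by wavenumbers k, ℓ ∈ {−K, …, K}: diagonal blocks i(ω_f + kω₀)I_d − Ĵ₀ and off-diagonal blocks −Ĵ_{k−ℓ}, together with B_HR = blkdiag(B, …, B). Then L_TS is invertible if and only if L_HR is invertible, and in that case σ₁(L_TS^{−1} B_TS)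 = σ₁(L_HR^{−1} B_HR). -/
/-!
Let `N = 2K+1` and let `F` be the unitary DFT matrix `F k j = N^{-1/2} e^{-i (k-K) θ_j}`, its rows
indexed by the centred wavenumbers `k - K`. The closed form of `D` is the sum of the weighted
geometric series `(1/N) ∑_k i k e^{i k (θ_j - θ_l)}` over the centred wavenumbers, so
`F D F* = diag(i (k-K))`; and conjugating `blkdiag(J_j)` by `F ⊗ I` gives the block matrix of
the DFT coefficients `Ĵ_{k-ℓ}`. Hence `L_HR = U L_TS U*` and `B_HR = U B_TS V*` for the unitaries
`U = F ⊗ I_d` and `V = F ⊗ I_m`, and both invertibility and `σ₁(L⁻¹ B)` are invariant under such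
a unitary equivalence.
-/

/-- The operator norm of a complex matrix induced by the Euclidean (`ℓ²`) vector norms.
This equals the largest singular value `σ₁`. -/
noncomputable def opNorm {a b : Type*} [Fintype a] [Fintype b] [DecidableEq b]
    (A : Matrix a b ℂ) : ℝ :=
  ‖LinearMap.toContinuousLinearMap (Matrix.toEuclideanLin A)‖

open Complex Matrix
open scoped Kronecker

section UnitaryInvariance

open scoped Matrix.Norms.L2Operator

variable {𝕜 m n : Type*} [RCLike 𝕜] [Fintype m] [Fintype n] [DecidableEq m] [DecidableEq n]

lemma l2_opNorm_unitary_mul {U : Matrix m m 𝕜} (hU : U ∈ unitaryGroup m 𝕜) (X : Matrix m n 𝕜) :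
    ‖U * X‖ = ‖X‖ := by
  have h : (U * X)ᴴ * (U * X) = Xᴴ * X := by
    rw [conjTranspose_mul, Matrix.mul_assoc, ← Matrix.mul_assoc Uᴴ, ← star_eq_conjTranspose,
      mem_unitaryGroup_iff'.mp hU, Matrix.one_mul]
  have := congrArg norm h
  rw [l2_opNorm_conjTranspose_mul_self, l2_opNorm_conjTranspose_mul_self] at this
  exact (mul_self_inj (norm_nonneg _) (norm_nonneg _)).mp this

lemma l2_opNorm_mul_unitary (X : Matrix m n 𝕜) {V : Matrix n n 𝕜} (hV : V ∈ unitaryGroup n 𝕜) :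
    ‖X * V‖ = ‖X‖ := by
  rw [← l2_opNorm_conjTranspose, conjTranspose_mul, ← star_eq_conjTranspose V,
    l2_opNorm_unitary_mul (Unitary.star_mem hV), l2_opNorm_conjTranspose]

omit [DecidableEq m] in
lemma opNorm_eq_l2_opNorm (A : Matrix m n ℂ) : opNorm A = ‖A‖ := rfl

end UnitaryInvariance

section UnitaryEquivalence

variable {R n p : Type*} [Fintype n] [Fintype p] [DecidableEq n] [DecidableEq p]

lemma isUnit_unitary_conj_iff [CommRing R] [StarRing R] {U : Matrix n n R}
    (hU : U ∈ unitaryGroup n R) (L : Matrix n n R) :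
    IsUnit (U * L * star U) ↔ IsUnit L := by
  let u := Unitary.toUnits ⟨U, hU⟩
  change IsUnit ((u : Matrix n n R) * L * ((u⁻¹ : (Matrix n n R)ˣ) : Matrix n n R)) ↔ _
  rw [Units.isUnit_mul_units, Units.isUnit_units_mul]

lemma inv_unitary_conj [CommRing R] [StarRing R] {U : Matrix n n R} (hU : U ∈ unitaryGroup n R)
    (L : Matrix n n R) :
    (U * L * star U)⁻¹ = U * L⁻¹ * star U := by
  rw [Matrix.mul_inv_rev, Matrix.mul_inv_rev, inv_eq_left_inv (mem_unitaryGroup_iff.mp hU),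
    inv_eq_left_inv (mem_unitaryGroup_iff'.mp hU), Matrix.mul_assoc]

lemma opNorm_inv_mul_unitary_conj {U : Matrix n n ℂ} {V : Matrix p p ℂ}
    (hU : U ∈ unitaryGroup n ℂ) (hV : V ∈ unitaryGroup p ℂ)
    (L : Matrix n n ℂ) (B : Matrix n p ℂ) :
    opNorm ((U * L * star U)⁻¹ * (U * B * star V)) = opNorm (L⁻¹ * B) := by
  have h : (U * L * star U)⁻¹ * (U * B * star V) = U * (L⁻¹ * B) * star V := by
    rw [inv_unitary_conj hU]
    simp only [Matrix.mul_assoc, ← Matrix.mul_assoc (star U) U, mem_unitaryGroup_iff'.mp hU,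
      Matrix.one_mul]
  rw [h, opNorm_eq_l2_opNorm, opNorm_eq_l2_opNorm, l2_opNorm_mul_unitary _ (Unitary.star_mem hV),
    l2_opNorm_unitary_mul hU]

end UnitaryEquivalence

section Kronecker

variable {R o m n : Type*} [CommRing R] [StarRing R] [Fintype o] [Fintype m] [Fintype n]
  [DecidableEq m] [DecidableEq n]

lemma kronecker_one_conj (A X : Matrix o o R) :
    (A ⊗ₖ (1 : Matrix m m R)) * (X ⊗ₖ 1) * (A ⊗ₖ (1 : Matrix m m R))ᴴ = (A * X * Aᴴ) ⊗ₖ 1 := by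
  rw [conjTranspose_kronecker, conjTranspose_one, ← mul_kronecker_mul, ← mul_kronecker_mul,
    Matrix.mul_one, Matrix.mul_one]

lemma kronecker_one_conj_one_kronecker [DecidableEq o] {A : Matrix o o R} (hA : A * Aᴴ = 1)
    (B : Matrix m n R) :
    (A ⊗ₖ (1 : Matrix m m R)) * ((1 : Matrix o o R) ⊗ₖ B) * (A ⊗ₖ (1 : Matrix n n R))ᴴ
      = (1 : Matrix o o R) ⊗ₖ B := by
  rw [conjTranspose_kronecker, conjTranspose_one, ← mul_kronecker_mul, ← mul_kronecker_mul,
    Matrix.mul_one, hA, Matrix.one_mul, Matrix.mul_one]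

end Kronecker

/-- Mathlib's `blockDiagonal` indexes blocks by the second factor; here the block index comes
first, matching the ordering `Fin N × Fin d` of the collocation unknowns. -/
def blockDiagonalFst {o m n α : Type*} [Zero α] [DecidableEq o] (M : o → Matrix m n α) :
    Matrix (o × m) (o × n) α :=
  of fun p q => if p.1 = q.1 then M p.1 p.2 q.2 else 0

lemma kronecker_one_mul_blockDiagonalFst_mul_conjTranspose {o m : Type*} [Fintype o] [Fintype m]
    [DecidableEq o] [DecidableEq m] (A : Matrix o o ℂ) (M : o → Matrix m m ℂ) :
    (A ⊗ₖ (1 : Matrix m m ℂ)) * blockDiagonalFst M * (A ⊗ₖ (1 : Matrix m m ℂ))ᴴ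
      = of fun p q => ∑ j, (A p.1 j * star (A q.1 j)) • M j p.2 q.2 := by
  ext ⟨k, a⟩ ⟨l, c⟩
  simp [mul_apply, Fintype.sum_prod_type, one_apply, blockDiagonalFst, apply_ite (starRingEnd ℂ),
    mul_right_comm]

lemma Fin.dvd_sub_iff_eq {N : ℕ} (i j : Fin N) : (N : ℤ) ∣ (i - j : ℤ) ↔ i = j := by
  refine ⟨fun h => Fin.ext ?_, fun h => by simp [h]⟩
  have := Int.eq_zero_of_abs_lt_dvd h (abs_lt.mpr ⟨by omega, by omega⟩)
  omega

lemma IsPrimitiveRoot.sum_fin_zpow_mul {F : Type*} [Field F] {ζ : F} {N : ℕ}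
    (hζ : IsPrimitiveRoot ζ N) (s : ℤ) :
    ∑ j : Fin N, ζ ^ (s * j) = if (N : ℤ) ∣ s then (N : F) else 0 := by
  have h : ∀ j : Fin N, ζ ^ (s * j) = (ζ ^ s) ^ (j : ℕ) := fun j => by
    rw [_root_.zpow_mul, zpow_natCast]
  simp only [h]
  rw [Fin.sum_univ_eq_sum_range (fun j => (ζ ^ s) ^ j)]
  split_ifs with hs
  · simp [(hζ.zpow_eq_one_iff_dvd s).mpr hs]
  · rw [geom_sum_eq (fun h1 => hs ((hζ.zpow_eq_one_iff_dvd s).mp h1)), ← zpow_natCast,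
      ← _root_.zpow_mul, mul_comm, _root_.zpow_mul, zpow_natCast, hζ.pow_eq_one, _root_.one_zpow,
      sub_self, zero_div]

lemma sub_one_mul_sum_range_mul_pow {R : Type*} [CommRing R] (x : R) (n : ℕ) :
    (x - 1) * ∑ t ∈ Finset.range n, (t : R) * x ^ t
      = n * x ^ n - x * ∑ t ∈ Finset.range n, x ^ t := by
  induction n with
  | zero => simp
  | succ n ih =>
    rw [Finset.sum_range_succ, Finset.sum_range_succ, mul_add, ih]
    push_cast
    ring

noncomputable def fourierRoot (N : ℕ) : ℂ := exp (2 * Real.pi * I / N)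

lemma isPrimitiveRoot_fourierRoot {N : ℕ} (hN : N ≠ 0) : IsPrimitiveRoot (fourierRoot N) N :=
  isPrimitiveRoot_exp N hN

lemma star_fourierRoot_zpow (N : ℕ) (s : ℤ) :
    star (fourierRoot N ^ s) = fourierRoot N ^ (-s) := by
  rw [fourierRoot, ← exp_int_mul, ← exp_int_mul, Complex.star_def, ← exp_conj]
  congr 1
  simp only [map_mul, map_div₀, map_intCast, map_natCast, map_ofNat, conj_ofReal, conj_I]
  push_cast
  ring

lemma exp_neg_I_mul_eq_fourierRoot_zpow (N : ℕ) (k : ℤ) (j : ℕ) :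
    exp (-I * k * ((2 * Real.pi * j / N : ℝ) : ℂ)) = fourierRoot N ^ (-(k * j)) := by
  rw [fourierRoot, ← exp_int_mul]
  congr 1
  push_cast
  ring

section CenteredDFT

variable (K : ℕ)

def centeredFreq (t : Fin (2 * K + 1)) : ℤ := t - K

lemma sum_centeredFreq : ∑ t, centeredFreq K t = 0 := by
  have h : ∑ t, centeredFreq K t = ∑ t, -centeredFreq K t := by
    rw [← Equiv.sum_comp Fin.revPerm (centeredFreq K)]
    refine Finset.sum_congr rfl fun t _ => ?_
    simp only [centeredFreq, Fin.revPerm_apply, Fin.val_rev]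
    rw [Nat.cast_sub t.isLt]
    push_cast
    ring
  rw [Finset.sum_neg_distrib] at h
  linarith

lemma sum_centeredFreq_mul_zpow {x : ℂ} (hx : x ≠ 1) (hxN : x ^ (2 * K + 1) = 1) :
    ∑ t, (centeredFreq K t : ℂ) * x ^ centeredFreq K t
      = (2 * K + 1 : ℕ) * x ^ (-(K : ℤ)) / (x - 1) := by
  have hx0 : x ≠ 0 := by rintro rfl; simp at hxN
  have hgeom : ∑ t ∈ Finset.range (2 * K + 1), x ^ t = 0 := by
    rw [geom_sum_eq hx, hxN, sub_self, zero_div]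
  have hterm : ∀ t : Fin (2 * K + 1), (centeredFreq K t : ℂ) * x ^ centeredFreq K t
      = x ^ (-(K : ℤ)) * ((t : ℕ) * x ^ (t : ℕ) - K * x ^ (t : ℕ)) := fun t => by
    rw [centeredFreq, zpow_sub₀ hx0, zpow_natCast, zpow_natCast, _root_.zpow_neg, zpow_natCast]
    push_cast
    field_simp
  have hweighted := sub_one_mul_sum_range_mul_pow x (2 * K + 1)
  rw [hgeom, hxN, mul_zero, sub_zero, mul_one] at hweighted
  rw [eq_div_iff (sub_ne_zero.mpr hx), Finset.sum_congr rfl fun t _ => hterm t, ← Finset.mul_sum,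
    Finset.sum_sub_distrib, ← Finset.mul_sum,
    Fin.sum_univ_eq_sum_range (fun t => (t : ℂ) * x ^ t),
    Fin.sum_univ_eq_sum_range (fun t => x ^ t), hgeom, ← hweighted]
  ring

noncomputable def centeredDFT : Matrix (Fin (2 * K + 1)) (Fin (2 * K + 1)) ℂ :=
  Matrix.of fun k j =>
    (Real.sqrt (2 * K + 1 : ℕ) : ℂ)⁻¹ * fourierRoot (2 * K + 1) ^ (-(centeredFreq K k * j))

lemma centeredDFT_mul_star (k j l j' : Fin (2 * K + 1)) :
    centeredDFT K k j * star (centeredDFT K l j')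
      = fourierRoot (2 * K + 1) ^ (centeredFreq K l * j' - centeredFreq K k * j)
        / (2 * K + 1 : ℕ) := by
  have hsqrt : (Real.sqrt (2 * K + 1 : ℕ) : ℂ) * (Real.sqrt (2 * K + 1 : ℕ) : ℂ)
      = (2 * K + 1 : ℕ) := by
    rw [← ofReal_mul, Real.mul_self_sqrt (Nat.cast_nonneg _), ofReal_natCast]
  have hω0 : fourierRoot (2 * K + 1) ≠ 0 := exp_ne_zero _
  simp only [centeredDFT, of_apply, star_mul', star_fourierRoot_zpow, neg_neg,
    Complex.star_def, map_inv₀, conj_ofReal]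
  rw [sub_eq_neg_add, zpow_add₀ hω0, ← hsqrt]
  ring

lemma centeredDFT_mem_unitaryGroup :
    centeredDFT K ∈ unitaryGroup (Fin (2 * K + 1)) ℂ := by
  rw [mem_unitaryGroup_iff]
  ext k l
  have hN : ((2 * K + 1 : ℕ) : ℂ) ≠ 0 := Nat.cast_ne_zero.mpr (by omega)
  have hexp : ∀ j : Fin (2 * K + 1), centeredFreq K l * j - centeredFreq K k * j
      = ((l : ℤ) - k) * j := fun j => by rw [centeredFreq, centeredFreq]; ring
  simp only [mul_apply, star_apply, centeredDFT_mul_star, hexp, ← Finset.sum_div,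
    (isPrimitiveRoot_fourierRoot (by omega : 2 * K + 1 ≠ 0)).sum_fin_zpow_mul,
    Fin.dvd_sub_iff_eq, one_apply, eq_comm (a := l)]
  split_ifs
  · exact div_self hN
  · exact zero_div _

lemma half_neg_one_zpow_div_sin {u : ℤ} (hu : fourierRoot (2 * K + 1) ^ u ≠ 1) :
    (1 / 2) * (-1 : ℂ) ^ u / sin (Real.pi * u / ((2 * K + 1 : ℕ) : ℂ))
      = I * (fourierRoot (2 * K + 1) ^ u) ^ (-(K : ℤ)) / (fourierRoot (2 * K + 1) ^ u - 1) := by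
  have hN : ((2 * K + 1 : ℕ) : ℂ) ≠ 0 := Nat.cast_ne_zero.mpr (by omega)
  set z := exp (Real.pi * u / ((2 * K + 1 : ℕ) : ℂ) * I) with hz
  have hz0 : z ≠ 0 := exp_ne_zero _
  have hx : fourierRoot (2 * K + 1) ^ u = z ^ 2 := by
    rw [fourierRoot, ← exp_int_mul, hz, ← exp_nat_mul]
    congr 1
    push_cast
    ring
  have hzN : z ^ (2 * K + 1) = (-1 : ℂ) ^ u := by
    rw [hz, ← exp_nat_mul, ← exp_pi_mul_I, ← exp_int_mul]
    congr 1
    field_simp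
  have hsign : (-1 : ℂ) ^ u * (-1 : ℂ) ^ u = 1 := by
    rw [← mul_zpow]; norm_num
  have hsin : sin (Real.pi * u / ((2 * K + 1 : ℕ) : ℂ)) = (z⁻¹ - z) * I / 2 := by
    rw [sin, hz, ← Complex.exp_neg]
    ring_nf
  rw [hx] at hu ⊢
  have hz2 : z ^ 2 - 1 ≠ 0 := sub_ne_zero.mpr hu
  have hzz : z⁻¹ - z ≠ 0 := by
    intro h
    apply hz2
    field_simp at h
    linear_combination -h
  rw [hsin, _root_.zpow_neg, zpow_natCast, ← pow_mul]
  field_simp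
  linear_combination ((-1 : ℂ) ^ u * (z ^ 2 - 1)) * hzN + (z ^ 2 - 1) * hsign + (z ^ 2 - 1) * I_sq

noncomputable def spectralDiff : Matrix (Fin (2 * K + 1)) (Fin (2 * K + 1)) ℂ :=
  Matrix.of fun j k =>
    if j = k then 0 else
      (1 / 2) * (-1 : ℂ) ^ ((j : ℤ) - (k : ℤ))
        / sin ((Real.pi : ℂ) * (((j : ℤ) - (k : ℤ) : ℤ) : ℂ) / ((2 * K + 1 : ℕ) : ℂ))

lemma spectralDiff_eq_conjTranspose_mul_diagonal_mul :
    spectralDiff K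
      = (centeredDFT K)ᴴ * diagonal (fun t => I * centeredFreq K t) * centeredDFT K := by
  ext j k
  have hN : ((2 * K + 1 : ℕ) : ℂ) ≠ 0 := Nat.cast_ne_zero.mpr (by omega)
  have hζ := isPrimitiveRoot_fourierRoot (by omega : 2 * K + 1 ≠ 0)
  have hterm : ∀ t, star (centeredDFT K t j) * (I * centeredFreq K t) * centeredDFT K t k
      = I / (2 * K + 1 : ℕ) * ((centeredFreq K t : ℂ)
        * (fourierRoot (2 * K + 1) ^ ((j : ℤ) - k)) ^ centeredFreq K t) := fun t => by
    rw [mul_comm, ← mul_assoc, centeredDFT_mul_star, ← _root_.zpow_mul]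
    field_simp
    ring_nf
  rw [mul_apply]
  simp only [mul_diagonal, conjTranspose_apply, hterm, ← Finset.mul_sum]
  rw [spectralDiff, of_apply]
  split_ifs with hjk
  · subst hjk
    simp only [sub_self, zpow_zero, _root_.one_zpow, mul_one]
    rw [← Int.cast_sum, sum_centeredFreq, Int.cast_zero, mul_zero]
  · have hx : fourierRoot (2 * K + 1) ^ ((j : ℤ) - k) ≠ 1 := fun h =>
      hjk <| (Fin.dvd_sub_iff_eq j k).mp <| (hζ.zpow_eq_one_iff_dvd _).mp h
    have hxN : (fourierRoot (2 * K + 1) ^ ((j : ℤ) - k)) ^ (2 * K + 1) = 1 := by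
      rw [← zpow_natCast, ← _root_.zpow_mul, hζ.zpow_eq_one_iff_dvd]
      exact dvd_mul_left _ _
    rw [half_neg_one_zpow_div_sin K hx, sum_centeredFreq_mul_zpow K hx hxN]
    field_simp

lemma centeredDFT_conj_spectralDiff :
    centeredDFT K * spectralDiff K * (centeredDFT K)ᴴ
      = diagonal (fun t => I * centeredFreq K t) := by
  have hF := mem_unitaryGroup_iff.mp (centeredDFT_mem_unitaryGroup K)
  rw [spectralDiff_eq_conjTranspose_mul_diagonal_mul, ← star_eq_conjTranspose]
  simp only [← Matrix.mul_assoc, hF, Matrix.one_mul]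
  simp only [Matrix.mul_assoc, hF, Matrix.mul_one]

noncomputable def dftCoeff {m n : Type*} (J : Fin (2 * K + 1) → Matrix m n ℂ) (k : ℤ) :
    Matrix m n ℂ :=
  (1 / ((2 * K + 1 : ℕ) : ℂ)) • ∑ j : Fin (2 * K + 1), fourierRoot (2 * K + 1) ^ (-(k * j)) • J j

variable {ι : Type*}

noncomputable def dftCoeffBlocks (J : Fin (2 * K + 1) → Matrix ι ι ℂ) :
    Matrix (Fin (2 * K + 1) × ι) (Fin (2 * K + 1) × ι) ℂ :=
  of fun p q => dftCoeff K J (centeredFreq K p.1 - centeredFreq K q.1) p.2 q.2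

lemma centeredDFT_conj_blockDiagonalFst [Fintype ι] [DecidableEq ι]
    (J : Fin (2 * K + 1) → Matrix ι ι ℂ) :
    (centeredDFT K ⊗ₖ (1 : Matrix ι ι ℂ)) * blockDiagonalFst J
        * (centeredDFT K ⊗ₖ (1 : Matrix ι ι ℂ))ᴴ = dftCoeffBlocks K J := by
  rw [kronecker_one_mul_blockDiagonalFst_mul_conjTranspose]
  ext p q
  simp only [dftCoeffBlocks, of_apply, centeredDFT_mul_star, dftCoeff, Matrix.smul_apply,
    Matrix.sum_apply, Finset.smul_sum, smul_smul]
  refine Finset.sum_congr rfl fun j _ => ?_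
  rw [show centeredFreq K q.1 * j - centeredFreq K p.1 * j
      = -((centeredFreq K p.1 - centeredFreq K q.1) * j) by ring, div_eq_inv_mul, one_div]

variable [DecidableEq ι] (ω₀ ωf : ℝ) (J : Fin (2 * K + 1) → Matrix ι ι ℂ)

noncomputable def timeSpectralOp : Matrix (Fin (2 * K + 1) × ι) (Fin (2 * K + 1) × ι) ℂ :=
  (I * ωf) • 1 - blockDiagonalFst J + (ω₀ : ℂ) • (spectralDiff K ⊗ₖ 1)

noncomputable def harmonicOp : Matrix (Fin (2 * K + 1) × ι) (Fin (2 * K + 1) × ι) ℂ :=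
  (I * ωf) • 1 - dftCoeffBlocks K J + (ω₀ : ℂ) • (diagonal (fun t => I * centeredFreq K t) ⊗ₖ 1)

lemma timeSpectralOp_apply (p q : Fin (2 * K + 1) × ι) :
    timeSpectralOp K ω₀ ωf J p q
      = (if p.1 = q.1 then (if p.2 = q.2 then I * ωf else 0) - J p.1 p.2 q.2 else 0)
        + ω₀ * spectralDiff K p.1 q.1 * (if p.2 = q.2 then 1 else 0) := by
  obtain ⟨j, a⟩ := p
  obtain ⟨k, b⟩ := q
  by_cases hjk : j = k <;> by_cases hab : a = b <;>
    simp [timeSpectralOp, hjk, hab, blockDiagonalFst, one_apply]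

lemma harmonicOp_apply (p q : Fin (2 * K + 1) × ι) :
    harmonicOp K ω₀ ωf J p q
      = (if p = q then I * (ωf + centeredFreq K p.1 * ω₀) else 0)
        - dftCoeff K J (centeredFreq K p.1 - centeredFreq K q.1) p.2 q.2 := by
  obtain ⟨j, a⟩ := p
  obtain ⟨k, b⟩ := q
  by_cases hjk : j = k <;> by_cases hab : a = b <;>
    simp [harmonicOp, dftCoeffBlocks, hjk, hab, one_apply]
  ring

lemma harmonicOp_eq_conj [Fintype ι] :
    harmonicOp K ω₀ ωf J
      = (centeredDFT K ⊗ₖ (1 : Matrix ι ι ℂ)) * timeSpectralOp K ω₀ ωf J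
        * (centeredDFT K ⊗ₖ (1 : Matrix ι ι ℂ))ᴴ := by
  have hU : (centeredDFT K ⊗ₖ (1 : Matrix ι ι ℂ)) * (centeredDFT K ⊗ₖ (1 : Matrix ι ι ℂ))ᴴ = 1 :=
    (kronecker_mem_unitary (centeredDFT_mem_unitaryGroup K) (one_mem _)).2
  simp only [timeSpectralOp, harmonicOp, Matrix.mul_add, Matrix.mul_sub, Matrix.add_mul,
    Matrix.sub_mul, Matrix.mul_smul, Matrix.smul_mul, Matrix.mul_one, hU,
    centeredDFT_conj_blockDiagonalFst, kronecker_one_conj, centeredDFT_conj_spectralDiff]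

end CenteredDFT

theorem tsr_hr_equivalence_general
    (K d m : ℕ) (ω₀ ωf : ℝ)
    (J : Fin (2 * K + 1) → Matrix (Fin d) (Fin d) ℂ) (B : Matrix (Fin d) (Fin m) ℂ)
    (D : Matrix (Fin (2 * K + 1)) (Fin (2 * K + 1)) ℂ)
    (hD : ∀ j k : Fin (2 * K + 1), D j k =
      if j = k then 0 else
        (1 / 2) * (-1 : ℂ) ^ ((j : ℤ) - (k : ℤ))
          / Complex.sin ((Real.pi : ℂ) * (((j : ℤ) - (k : ℤ) : ℤ) : ℂ) / ((2 * K + 1 : ℕ) : ℂ)))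
    (LTS : Matrix (Fin (2 * K + 1) × Fin d) (Fin (2 * K + 1) × Fin d) ℂ)
    (hLTS : ∀ p q : Fin (2 * K + 1) × Fin d, LTS p q =
      (if p.1 = q.1 then
        (if p.2 = q.2 then Complex.I * (ωf : ℂ) else 0) - J p.1 p.2 q.2
       else 0)
      + (ω₀ : ℂ) * D p.1 q.1 * (if p.2 = q.2 then 1 else 0))
    (BTS : Matrix (Fin (2 * K + 1) × Fin d) (Fin (2 * K + 1) × Fin m) ℂ)
    (hBTS : ∀ p q, BTS p q = if p.1 = q.1 then B p.2 q.2 else 0)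
    (Jhat : ℤ → Matrix (Fin d) (Fin d) ℂ)
    (hJhat : ∀ k : ℤ, Jhat k = (1 / ((2 * K + 1 : ℕ) : ℂ)) •
      ∑ j : Fin (2 * K + 1),
        Complex.exp (-Complex.I * (k : ℂ)
          * ((2 * Real.pi * (j : ℕ) / (2 * K + 1 : ℕ) : ℝ) : ℂ)) • J j)
    (LHR : Matrix (Fin (2 * K + 1) × Fin d) (Fin (2 * K + 1) × Fin d) ℂ)
    (hLHR : ∀ p q : Fin (2 * K + 1) × Fin d, LHR p q =
      (if p = q then
        Complex.I * ((ωf : ℂ) + ((((p.1 : ℤ) - (K : ℤ)) : ℤ) : ℂ) * (ω₀ : ℂ))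
       else 0)
      - Jhat (((p.1 : ℤ) - (K : ℤ)) - ((q.1 : ℤ) - (K : ℤ))) p.2 q.2)
    (BHR : Matrix (Fin (2 * K + 1) × Fin d) (Fin (2 * K + 1) × Fin m) ℂ)
    (hBHR : ∀ p q, BHR p q = if p.1 = q.1 then B p.2 q.2 else 0) :
    (IsUnit LTS ↔ IsUnit LHR) ∧
      (IsUnit LTS → opNorm (LTS⁻¹ * BTS) = opNorm (LHR⁻¹ * BHR)) := by
  have hF := centeredDFT_mem_unitaryGroup K
  have hU := kronecker_mem_unitary hF (one_mem (unitary (Matrix (Fin d) (Fin d) ℂ)))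
  have hV := kronecker_mem_unitary hF (one_mem (unitary (Matrix (Fin m) (Fin m) ℂ)))
  have hLTS' : LTS = timeSpectralOp K ω₀ ωf J := by
    have hDeq : D = spectralDiff K := by ext j k; rw [hD]; rfl
    ext p q
    rw [hLTS, hDeq, timeSpectralOp_apply]
  have hLHR' : LHR = harmonicOp K ω₀ ωf J := by
    have hJhatEq : Jhat = dftCoeff K J := funext fun k => by
      simp only [hJhat, dftCoeff, exp_neg_I_mul_eq_fourierRoot_zpow]
    ext p q
    rw [hLHR, hJhatEq, harmonicOp_apply]
    rfl
  have hB : BHR = (centeredDFT K ⊗ₖ (1 : Matrix (Fin d) (Fin d) ℂ)) * BTS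
      * star (centeredDFT K ⊗ₖ (1 : Matrix (Fin m) (Fin m) ℂ)) := by
    have hBlocks : ∀ X : Matrix (Fin (2 * K + 1) × Fin d) (Fin (2 * K + 1) × Fin m) ℂ,
        (∀ p q, X p q = if p.1 = q.1 then B p.2 q.2 else 0) → X = 1 ⊗ₖ B := fun X hX => by
      ext p q
      simp [hX, one_apply]
    rw [hBlocks BHR hBHR, hBlocks BTS hBTS, star_eq_conjTranspose,
      kronecker_one_conj_one_kronecker (mem_unitaryGroup_iff.mp hF)]
  rw [hLHR', harmonicOp_eq_conj, ← star_eq_conjTranspose, hB, hLTS', isUnit_unitary_conj_iff hU]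
  exact ⟨Iff.rfl, fun _ => (opNorm_inv_mul_unitary_conj hU hV _ _).symm⟩

/-- **Equivalence of the time-spectral and harmonic resolvent operators.**
With `N = 2K+1` collocation points `θ_j = 2πj/N`, the Fourier spectral differentiation
matrix `D`, the time-spectral operator `L_TS = blkdiag(iω_f I - J_j) + ω₀ (D ⊗ I_d)` with
`B_TS = blkdiag(B,…,B)`, and the harmonic operator `L_HR` built from the DFT coefficients
`Ĵ_k = (1/N) Σ_j J_j e^{-i k θ_j}` with `B_HR = blkdiag(B,…,B)`:
`L_TS` is invertible iff `L_HR` is, and then `σ₁(L_TS⁻¹ B_TS) = σ₁(L_HR⁻¹ B_HR)`. -/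
theorem tsr_hr_equivalence
    (K d m : ℕ) (ω₀ ωf : ℝ) (hω₀ : 0 < ω₀)
    (J : Fin (2 * K + 1) → Matrix (Fin d) (Fin d) ℂ) (B : Matrix (Fin d) (Fin m) ℂ)
    (D : Matrix (Fin (2 * K + 1)) (Fin (2 * K + 1)) ℂ)
    (hD : ∀ j k : Fin (2 * K + 1), D j k =
      if j = k then 0 else
        (1 / 2) * (-1 : ℂ) ^ ((j : ℤ) - (k : ℤ))
          / Complex.sin ((Real.pi : ℂ) * (((j : ℤ) - (k : ℤ) : ℤ) : ℂ) / ((2 * K + 1 : ℕ) : ℂ)))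
    (LTS : Matrix (Fin (2 * K + 1) × Fin d) (Fin (2 * K + 1) × Fin d) ℂ)
    (hLTS : ∀ p q : Fin (2 * K + 1) × Fin d, LTS p q =
      (if p.1 = q.1 then
        (if p.2 = q.2 then Complex.I * (ωf : ℂ) else 0) - J p.1 p.2 q.2
       else 0)
      + (ω₀ : ℂ) * D p.1 q.1 * (if p.2 = q.2 then 1 else 0))
    (BTS : Matrix (Fin (2 * K + 1) × Fin d) (Fin (2 * K + 1) × Fin m) ℂ)
    (hBTS : ∀ p q, BTS p q = if p.1 = q.1 then B p.2 q.2 else 0)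
    (Jhat : ℤ → Matrix (Fin d) (Fin d) ℂ)
    (hJhat : ∀ k : ℤ, Jhat k = (1 / ((2 * K + 1 : ℕ) : ℂ)) •
      ∑ j : Fin (2 * K + 1),
        Complex.exp (-Complex.I * (k : ℂ)
          * ((2 * Real.pi * (j : ℕ) / (2 * K + 1 : ℕ) : ℝ) : ℂ)) • J j)
    (LHR : Matrix (Fin (2 * K + 1) × Fin d) (Fin (2 * K + 1) × Fin d) ℂ)
    (hLHR : ∀ p q : Fin (2 * K + 1) × Fin d, LHR p q =
      (if p = q then
        Complex.I * ((ωf : ℂ) + ((((p.1 : ℤ) - (K : ℤ)) : ℤ) : ℂ) * (ω₀ : ℂ))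
       else 0)
      - Jhat (((p.1 : ℤ) - (K : ℤ)) - ((q.1 : ℤ) - (K : ℤ))) p.2 q.2)
    (BHR : Matrix (Fin (2 * K + 1) × Fin d) (Fin (2 * K + 1) × Fin m) ℂ)
    (hBHR : ∀ p q, BHR p q = if p.1 = q.1 then B p.2 q.2 else 0) :
    (IsUnit LTS ↔ IsUnit LHR) ∧
      (IsUnit LTS → opNorm (LTS⁻¹ * BTS) = opNorm (LHR⁻¹ * BHR)) :=
  tsr_hr_equivalence_general K d m ω₀ ωf J B D hD LTS hLTS BTS hBTS Jhat hJhat LHR hLHR BHR hBHR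
end

section
/- Let n ∈ ℕ and let J : ℝ → ℂ^{n×n} be a matrix-valued function. Let p, q, v : ℝ → ℂⁿ and c : ℝ → ℂ be differentiable, and f : ℝ → ℂⁿ. Assume for all t ∈ ℝ: (i) p′(t) = J(t) p(t); (ii) q′(t) = −J(t)† q(t); (iii) ⟨q(t), p(t)⟩ = 1; (iv) ⟨q(t), v(t)⟩ = 0; and (v) the function η(t) := c(t) p(t) + v(t) satisfies η′(t) = J(t) η(t) + f(t). Then c′(t) = ⟨q(t), f(t)⟩ for all t ∈ ℝ. -/
/-!
Since `⟨q, p⟩ = 1` and `⟨q, v⟩ = 0`, the amplitude is `c = ⟨q, η⟩`. Differentiating,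
`c' = ⟨-J† q, η⟩ + ⟨q, J η + f⟩`, and the two `J`-terms cancel because `J†` is the
adjoint of `J` for `⟨·,·⟩`, leaving `⟨q, f⟩`.
-/

open Matrix

/-- The standard complex inner product on `ℂⁿ`, conjugate-linear in the first argument. -/
noncomputable def cinner {n : ℕ} (x y : Fin n → ℂ) : ℂ :=
  ∑ i, (starRingEnd ℂ) (x i) * y i

section cinner

variable {n : ℕ}

theorem cinner_eq_star_dotProduct (x y : Fin n → ℂ) : cinner x y = star x ⬝ᵥ y := rfl

theorem cinner_smul_add_right (x y z : Fin n → ℂ) (a : ℂ) :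
    cinner x (a • y + z) = a * cinner x y + cinner x z := by
  simp only [cinner_eq_star_dotProduct, dotProduct_add, dotProduct_smul, smul_eq_mul]

theorem cinner_add_right (x y z : Fin n → ℂ) : cinner x (y + z) = cinner x y + cinner x z := by
  simp only [cinner_eq_star_dotProduct, dotProduct_add]

theorem cinner_neg_left (x y : Fin n → ℂ) : cinner (-x) y = -cinner x y := by
  simp only [cinner_eq_star_dotProduct, star_neg, neg_dotProduct]

theorem cinner_conjTranspose_mulVec_left (A : Matrix (Fin n) (Fin n) ℂ) (x y : Fin n → ℂ) :
    cinner (Aᴴ *ᵥ x) y = cinner x (A *ᵥ y) := by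
  simp only [cinner_eq_star_dotProduct, star_mulVec, conjTranspose_conjTranspose,
    dotProduct_mulVec]

theorem HasDerivAt.cinner {x y : ℝ → Fin n → ℂ} {x' y' : Fin n → ℂ} {t : ℝ}
    (hx : HasDerivAt x x' t) (hy : HasDerivAt y y' t) :
    HasDerivAt (fun s => _root_.cinner (x s) (y s))
      (_root_.cinner x' (y t) + _root_.cinner (x t) y') t := by
  have hxi := hasDerivAt_pi.mp hx
  have hyi := hasDerivAt_pi.mp hy
  simp only [_root_.cinner, ← Finset.sum_add_distrib]
  exact HasDerivAt.fun_sum fun i _ => (hxi i).star.mul (hyi i)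

end cinner

theorem hasDerivAt_cinner_of_adjoint {n : ℕ} {J : Matrix (Fin n) (Fin n) ℂ}
    {q η : ℝ → Fin n → ℂ} {f : Fin n → ℂ} {t : ℝ}
    (hq : HasDerivAt q (-(Jᴴ *ᵥ q t)) t) (hη : HasDerivAt η (J *ᵥ η t + f) t) :
    HasDerivAt (fun s => cinner (q s) (η s)) (cinner (q t) f) t := by
  convert hq.cinner hη using 1
  rw [cinner_neg_left, cinner_conjTranspose_mulVec_left, cinner_add_right]
  ring

theorem phase_drift_rate_general
    (n : ℕ) (J : ℝ → Matrix (Fin n) (Fin n) ℂ)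
    (p q v : ℝ → (Fin n → ℂ)) (c : ℝ → ℂ) (f : ℝ → (Fin n → ℂ))
    (hq : ∀ t : ℝ, HasDerivAt q (-((J t)ᴴ.mulVec (q t))) t)
    (hqp : ∀ t : ℝ, cinner (q t) (p t) = 1)
    (hqv : ∀ t : ℝ, cinner (q t) (v t) = 0)
    (hη : ∀ t : ℝ, HasDerivAt (fun s : ℝ => c s • p s + v s)
      ((J t).mulVec (c t • p t + v t) + f t) t) :
    ∀ t : ℝ, deriv c t = cinner (q t) (f t) := by
  intro t
  have hc_eq : (fun s => cinner (q s) (c s • p s + v s)) = c := by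
    funext s
    rw [cinner_smul_add_right, hqp, hqv, mul_one, add_zero]
  rw [← hc_eq]
  exact (hasDerivAt_cinner_of_adjoint (hq t) (hη t)).deriv

/-- **Phase drift rate formula.**
If `p′ = J p` (neutral mode), `q′ = -J† q` (adjoint mode), `⟨q, p⟩ ≡ 1`, `⟨q, v⟩ ≡ 0`,
and `η = c·p + v` satisfies `η′ = J η + f`, then `c′(t) = ⟨q(t), f(t)⟩` for all `t`. -/
theorem phase_drift_rate
    (n : ℕ) (J : ℝ → Matrix (Fin n) (Fin n) ℂ)
    (p q v : ℝ → (Fin n → ℂ)) (c : ℝ → ℂ) (f : ℝ → (Fin n → ℂ))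
    (hp : ∀ t : ℝ, HasDerivAt p ((J t).mulVec (p t)) t)
    (hq : ∀ t : ℝ, HasDerivAt q (-((J t)ᴴ.mulVec (q t))) t)
    (hv : Differentiable ℝ v) (hc : Differentiable ℝ c)
    (hqp : ∀ t : ℝ, cinner (q t) (p t) = 1)
    (hqv : ∀ t : ℝ, cinner (q t) (v t) = 0)
    (hη : ∀ t : ℝ, HasDerivAt (fun s : ℝ => c s • p s + v s)
      ((J t).mulVec (c t • p t + v t) + f t) t) :
    ∀ t : ℝ, deriv c t = cinner (q t) (f t) :=
  phase_drift_rate_general n J p q v c f hq hqp hqv hη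
end
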